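/- arXiv:2410.15129 — 7 statements merged into one kernel-verified Lean document; each statement's English description precedes it below -/
import Mathlib

section
/- Let H be a self-adjoint operator on a finite-dimensional complex inner product space, ψ a unit vector with energy E = ⟨ψ, Hψ⟩ and variance R² = ⟨ψ, H²ψ⟩ − E². If α < β are reals with R² < (β − E)(E − α), then H has at least one eigenvalue in the open interval (α, β). -/
/-!
Expand `ψ = ∑ cᵢ bᵢ` in an orthonormal eigenbasis of `T`, with eigenvalues `λᵢ`. Then
`⟪ψ, (T - α)(T - β) ψ⟫ = ∑ (λᵢ - α)(λᵢ - β) |cᵢ|²`, while the moments of `ψ` give it the value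
`R² - (β - E)(E - α) < 0`. So some `(λᵢ - α)(λᵢ - β)` is negative, i.e. `λᵢ ∈ (α, β)`.
-/

open scoped InnerProductSpace

section

variable {𝕜 E ι : Type*} [RCLike 𝕜] [NormedAddCommGroup E] [InnerProductSpace 𝕜 E] [Fintype ι]

theorem OrthonormalBasis.inner_self_apply_eq_sum_of_apply_eq_smul (b : OrthonormalBasis ι 𝕜 E)
    {A : E →ₗ[𝕜] E} {μ : ι → 𝕜} (hA : ∀ i, A (b i) = μ i • b i) (ψ : E) :
    ⟪ψ, A ψ⟫_𝕜 = ∑ i, μ i * ‖⟪b i, ψ⟫_𝕜‖ ^ 2 := by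
  have hAψ : A ψ = ∑ i, (⟪b i, ψ⟫_𝕜 * μ i) • b i := by
    conv_lhs => rw [← b.sum_repr' ψ]
    simp only [map_sum, map_smul, hA, smul_smul]
  rw [hAψ, inner_sum]
  refine Finset.sum_congr rfl fun i _ => ?_
  rw [inner_smul_right, ← inner_conj_symm ψ (b i), mul_right_comm, RCLike.mul_conj,
    mul_comm]

theorem LinearMap.inner_sub_smul_mul_sub_smul_apply (T : E →ₗ[𝕜] E) (a b : 𝕜) (ψ : E) :
    ⟪ψ, ((T - a • 1) * (T - b • 1)) ψ⟫_𝕜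
      = ⟪ψ, T (T ψ)⟫_𝕜 - (a + b) * ⟪ψ, T ψ⟫_𝕜 + a * b * ⟪ψ, ψ⟫_𝕜 := by
  simp only [Module.End.mul_apply, LinearMap.sub_apply, LinearMap.smul_apply, Module.End.one_apply,
    map_sub, map_smul, inner_sub_right, inner_smul_right]
  ring

theorem Set.mem_Ioo_of_sub_mul_sub_neg {α β x : ℝ} (hαβ : α < β) (h : (x - α) * (x - β) < 0) :
    x ∈ Set.Ioo α β := by
  constructor <;> nlinarith

variable [FiniteDimensional 𝕜 E]

theorem LinearMap.IsSymmetric.exists_hasEigenvalue_mem_Ioo {T : E →ₗ[𝕜] E} (hT : T.IsSymmetric)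
    {α β : ℝ} (hαβ : α < β) {ψ : E}
    (hψ : RCLike.re ⟪ψ, ((T - (α : 𝕜) • 1) * (T - (β : 𝕜) • 1)) ψ⟫_𝕜 < 0) :
    ∃ μ : ℝ, μ ∈ Set.Ioo α β ∧ Module.End.HasEigenvalue T (μ : 𝕜) := by
  set b := hT.eigenvectorBasis rfl
  set ev := hT.eigenvalues rfl
  have hS : ∀ i, ((T - (α : 𝕜) • 1) * (T - (β : 𝕜) • 1)) (b i)
      = (((ev i - α) * (ev i - β) : ℝ) : 𝕜) • b i := by
    intro i
    simp only [Module.End.mul_apply, LinearMap.sub_apply, LinearMap.smul_apply,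
      Module.End.one_apply, map_smul, b, hT.apply_eigenvectorBasis, ev, smul_smul,
      ← sub_smul]
    congr 1
    push_cast
    ring
  rw [b.inner_self_apply_eq_sum_of_apply_eq_smul hS] at hψ
  simp only [map_sum, ← RCLike.ofReal_pow, ← RCLike.ofReal_mul, RCLike.ofReal_re] at hψ
  by_contra! h
  refine hψ.not_ge (Finset.sum_nonneg fun i _ => mul_nonneg ?_ (sq_nonneg _))
  by_contra! hi
  exact h _ (Set.mem_Ioo_of_sub_mul_sub_neg hαβ hi) (hT.hasEigenvalue_eigenvalues rfl i)

end

/-- If `R² < (β − E)(E − α)` then the self-adjoint operator `T` has an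
eigenvalue in the open interval `(α, β)`. -/
theorem kato_eigenvalue_exists
    {V : Type*} [NormedAddCommGroup V] [InnerProductSpace ℂ V]
    [FiniteDimensional ℂ V]
    (T : V →ₗ[ℂ] V) (hT : T.IsSymmetric)
    (ψ : V) (hψ : ‖ψ‖ = 1) (Eψ R2 α β : ℝ)
    (hE : (inner ℂ ψ (T ψ) : ℂ) = (Eψ : ℂ))
    (hR : (inner ℂ ψ (T (T ψ)) : ℂ) = ((R2 + Eψ ^ 2 : ℝ) : ℂ))
    (hαβ : α < β) (hK : R2 < (β - Eψ) * (Eψ - α)) :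
    ∃ μ : ℝ, α < μ ∧ μ < β ∧ Module.End.HasEigenvalue T (μ : ℂ) := by
  have hψψ : inner ℂ ψ ψ = (1 : ℂ) := by
    rw [inner_self_eq_norm_sq_to_K, hψ]
    norm_num
  have hquad : inner ℂ ψ (((T - (α : ℂ) • 1) * (T - (β : ℂ) • 1)) ψ)
      = ((R2 - (β - Eψ) * (Eψ - α) : ℝ) : ℂ) := by
    rw [LinearMap.inner_sub_smul_mul_sub_smul_apply, hE, hR, hψψ]
    push_cast
    ring
  obtain ⟨μ, ⟨hαμ, hμβ⟩, hμ⟩ := hT.exists_hasEigenvalue_mem_Ioo hαβ (ψ := ψ) <| by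
    rw [RCLike.ofReal_eq_complex_ofReal, hquad, RCLike.re_to_complex, Complex.ofReal_re]
    linarith
  exact ⟨μ, hαμ, hμβ, hμ⟩
end

section
/- Let H be a self-adjoint operator on a finite-dimensional complex inner product space, ψ a unit vector with energy E and variance R². If α < β satisfy R² < (β − E)(E − α) and H has exactly one eigenvalue λ in (α, β), then E − R²/(β − E) ≤ λ ≤ E + R²/(E − α) (Kato's inequality). -/
/-!
For real `s`, `t` one has `⟪(T - s)ψ, (T - t)ψ⟫ = R² + (E - s)(E - t)`, while in an orthonormal
eigenbasis the same inner product is `∑ᵢ (μᵢ - s)(μᵢ - t)|ψᵢ|²`, which is nonnegative as soon as no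
eigenvalue lies strictly between `s` and `t`. The pairs `(λ, β)` and `(α, λ)` give the two bounds;
the pair `(E, E)` gives `R² ≥ 0`, which together with `R² < (β - E)(E - α)` puts `E` in `(α, β)`.
-/

open Module.End RCLike
open scoped InnerProductSpace ComplexConjugate

namespace LinearMap.IsSymmetric

variable {𝕜 V : Type*} [RCLike 𝕜] [NormedAddCommGroup V] [InnerProductSpace 𝕜 V]
  {T : V →ₗ[𝕜] V}

theorem inner_sub_smul_sub_smul_of_moments (hT : T.IsSymmetric) {x : V} (hx : ‖x‖ = 1)
    {E R2 : ℝ} (hE : ⟪x, T x⟫_𝕜 = E) (hR : ⟪x, T (T x)⟫_𝕜 = ((R2 + E ^ 2 : ℝ) : 𝕜))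
    (s t : ℝ) :
    ⟪T x - (s : 𝕜) • x, T x - (t : 𝕜) • x⟫_𝕜 = ((R2 + (E - s) * (E - t) : ℝ) : 𝕜) := by
  have hTx : ⟪T x, x⟫_𝕜 = E := by rw [hT, hE]
  rw [inner_sub_left, inner_sub_right, inner_sub_right, inner_smul_left, inner_smul_right,
    inner_smul_left, inner_smul_right, hT, hR, hTx, hE, inner_self_eq_norm_sq_to_K, hx,
    conj_ofReal]
  push_cast
  ring

variable [FiniteDimensional 𝕜 V]

theorem inner_sub_smul_sub_smul_eq_sum (hT : T.IsSymmetric) (x : V) (s t : ℝ) :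
    ⟪T x - (s : 𝕜) • x, T x - (t : 𝕜) • x⟫_𝕜 =
      ∑ i, (((hT.eigenvalues rfl i - s) * (hT.eigenvalues rfl i - t) *
        ‖(hT.eigenvectorBasis rfl).repr x i‖ ^ 2 : ℝ) : 𝕜) := by
  set b := hT.eigenvectorBasis rfl
  have hrepr (u : ℝ) (i) : b.repr (T x - (u : 𝕜) • x) i =
      ((hT.eigenvalues rfl i : 𝕜) - u) * b.repr x i := by
    simp only [map_sub, map_smul, PiLp.sub_apply, PiLp.smul_apply, smul_eq_mul, b,
      hT.eigenvectorBasis_apply_self_apply]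
    ring
  rw [← b.repr.inner_map_map, PiLp.inner_apply]
  refine Finset.sum_congr rfl fun i _ => ?_
  rw [hrepr, hrepr, inner_apply, map_mul, map_sub, conj_ofReal, conj_ofReal]
  push_cast
  rw [← RCLike.mul_conj]
  ring

theorem re_inner_sub_smul_sub_smul_nonneg (hT : T.IsSymmetric) {s t : ℝ}
    (h : ∀ μ : ℝ, HasEigenvalue T (μ : 𝕜) → 0 ≤ (μ - s) * (μ - t)) (x : V) :
    0 ≤ re ⟪T x - (s : 𝕜) • x, T x - (t : 𝕜) • x⟫_𝕜 := by
  rw [hT.inner_sub_smul_sub_smul_eq_sum, map_sum]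
  refine Finset.sum_nonneg fun i _ => ?_
  rw [ofReal_re]
  exact mul_nonneg (h _ (hT.hasEigenvalue_eigenvalues rfl i)) (sq_nonneg _)

theorem add_sub_mul_sub_nonneg_of_eigenvalues (hT : T.IsSymmetric) {x : V} (hx : ‖x‖ = 1)
    {E R2 : ℝ} (hE : ⟪x, T x⟫_𝕜 = E) (hR : ⟪x, T (T x)⟫_𝕜 = ((R2 + E ^ 2 : ℝ) : 𝕜))
    {s t : ℝ} (h : ∀ μ : ℝ, HasEigenvalue T (μ : 𝕜) → 0 ≤ (μ - s) * (μ - t)) :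
    0 ≤ R2 + (E - s) * (E - t) := by
  simpa [hT.inner_sub_smul_sub_smul_of_moments hx hE hR] using
    hT.re_inner_sub_smul_sub_smul_nonneg h x

end LinearMap.IsSymmetric

theorem sub_mul_sub_nonneg_of_le_or_le {μ s t : ℝ} (hst : s ≤ t) (h : μ ≤ s ∨ t ≤ μ) :
    0 ≤ (μ - s) * (μ - t) := by
  rcases h with h | h
  · exact mul_nonneg_of_nonpos_of_nonpos (by linarith) (by linarith)
  · exact mul_nonneg (by linarith) (by linarith)

theorem kato_bounds_of_quadratic_bounds {E R2 α β lam : ℝ} (hR2 : 0 ≤ R2) (hαβ : α < β)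
    (hK : R2 < (β - E) * (E - α)) (hlow : 0 ≤ R2 + (E - lam) * (E - β))
    (hupp : 0 ≤ R2 + (E - α) * (E - lam)) :
    E - R2 / (β - E) ≤ lam ∧ lam ≤ E + R2 / (E - α) := by
  have hβE : 0 < β - E := by nlinarith
  have hEα : 0 < E - α := by nlinarith
  constructor
  · rw [sub_le_comm, le_div_iff₀ hβE]
    nlinarith
  · rw [← sub_le_iff_le_add', le_div_iff₀ hEα]
    nlinarith

theorem kato_inequality_general
    {V : Type*} [NormedAddCommGroup V] [InnerProductSpace ℂ V]
    [FiniteDimensional ℂ V]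
    (T : V →ₗ[ℂ] V) (hT : T.IsSymmetric)
    (ψ : V) (hψ : ‖ψ‖ = 1) (Eψ R2 α β lam : ℝ)
    (hE : (inner ℂ ψ (T ψ) : ℂ) = (Eψ : ℂ))
    (hR : (inner ℂ ψ (T (T ψ)) : ℂ) = ((R2 + Eψ ^ 2 : ℝ) : ℂ))
    (hK : R2 < (β - Eψ) * (Eψ - α))
    (hlam_mem : α < lam ∧ lam < β)
    (huniq : ∀ μ : ℝ, Module.End.HasEigenvalue T (μ : ℂ) →
      α < μ → μ < β → μ = lam) :
    Eψ - R2 / (β - Eψ) ≤ lam ∧ lam ≤ Eψ + R2 / (Eψ - α) := by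
  obtain ⟨hαl, hlβ⟩ := hlam_mem
  have hgap (μ : ℝ) (hμ : HasEigenvalue T (μ : ℂ)) : μ ≤ α ∨ μ = lam ∨ β ≤ μ := by
    by_contra! h
    exact h.2.1 (huniq μ hμ h.1 h.2.2)
  have bound {s t : ℝ} (h : ∀ μ : ℝ, HasEigenvalue T (μ : ℂ) → 0 ≤ (μ - s) * (μ - t)) :=
    hT.add_sub_mul_sub_nonneg_of_eigenvalues hψ hE hR h
  have hR2 : 0 ≤ R2 := by simpa using bound fun μ _ => mul_self_nonneg (μ - Eψ)
  have hlow := bound (s := lam) (t := β) fun μ hμ => sub_mul_sub_nonneg_of_le_or_le hlβ.le <| by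
    rcases hgap μ hμ with h | rfl | h
    exacts [.inl (h.trans hαl.le), .inl le_rfl, .inr h]
  have hupp := bound (s := α) (t := lam) fun μ hμ => sub_mul_sub_nonneg_of_le_or_le hαl.le <| by
    rcases hgap μ hμ with h | rfl | h
    exacts [.inl h, .inr le_rfl, .inr (hlβ.le.trans h)]
  exact kato_bounds_of_quadratic_bounds hR2 (hαl.trans hlβ) hK hlow hupp

/-- Kato's inequality: if the self-adjoint operator `T` has exactly one
eigenvalue `lam` in `(α, β)` and `R² < (β − E)(E − α)`, then
`E − R²/(β − E) ≤ lam ≤ E + R²/(E − α)`. -/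
theorem kato_inequality
    {V : Type*} [NormedAddCommGroup V] [InnerProductSpace ℂ V]
    [FiniteDimensional ℂ V]
    (T : V →ₗ[ℂ] V) (hT : T.IsSymmetric)
    (ψ : V) (hψ : ‖ψ‖ = 1) (Eψ R2 α β lam : ℝ)
    (hE : (inner ℂ ψ (T ψ) : ℂ) = (Eψ : ℂ))
    (hR : (inner ℂ ψ (T (T ψ)) : ℂ) = ((R2 + Eψ ^ 2 : ℝ) : ℂ))
    (hαβ : α < β) (hK : R2 < (β - Eψ) * (Eψ - α))
    (hlam : Module.End.HasEigenvalue T (lam : ℂ))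
    (hlam_mem : α < lam ∧ lam < β)
    (huniq : ∀ μ : ℝ, Module.End.HasEigenvalue T (μ : ℂ) →
      α < μ → μ < β → μ = lam) :
    Eψ - R2 / (β - Eψ) ≤ lam ∧ lam ≤ Eψ + R2 / (Eψ - α) :=
  kato_inequality_general T hT ψ hψ Eψ R2 α β lam hE hR hK hlam_mem huniq
end

section
/- Let H be a self-adjoint operator on a finite-dimensional complex inner product space whose lowest eigenvalue E_gs is simple (isolated), and let E_es be the second-lowest point of the spectrum. If ψ is a unit vector with ⟨ψ, Hψ⟩ < E_es, then E_gs ≥ ⟨ψ, Hψ⟩ − (⟨ψ, H²ψ⟩ − ⟨ψ, Hψ⟩²)/(E_es − ⟨ψ, Hψ⟩) (Temple's inequality). -/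
/-!
No eigenvalue of `T` lies strictly between `Egs` and `Ees`, so `(μ - Egs) * (μ - Ees) ≥ 0` on the
spectrum and the operator `(T - Egs) (T - Ees)` is positive. Its expectation in `ψ` is
`R2 - (Eψ - Egs) * (Ees - Eψ)`, and dividing by `Ees - Eψ > 0` gives the bound.
-/

open Module Module.End RCLike
open scoped InnerProductSpace

namespace LinearMap.IsSymmetric

variable {𝕜 E : Type*} [RCLike 𝕜] [NormedAddCommGroup E] [InnerProductSpace 𝕜 E]
  [FiniteDimensional 𝕜 E] {T : E →ₗ[𝕜] E} (hT : T.IsSymmetric) {n : ℕ} (hn : finrank 𝕜 E = n)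

theorem norm_sq_eq_sum_eigenvectorBasis (x : E) :
    ‖x‖ ^ 2 = ∑ i, ‖(hT.eigenvectorBasis hn).repr x i‖ ^ 2 := by
  rw [← (hT.eigenvectorBasis hn).repr.norm_map, EuclideanSpace.norm_sq_eq]

theorem re_inner_apply_self_eq_sum (x : E) :
    re ⟪x, T x⟫_𝕜 = ∑ i, hT.eigenvalues hn i * ‖(hT.eigenvectorBasis hn).repr x i‖ ^ 2 := by
  rw [← (hT.eigenvectorBasis hn).repr.inner_map_map, PiLp.inner_apply, map_sum]
  refine Finset.sum_congr rfl fun i _ => ?_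
  rw [eigenvectorBasis_apply_self_apply, inner_apply, mul_assoc, mul_conj, ← ofReal_pow,
    ← ofReal_mul, ofReal_re]

theorem norm_apply_sq_eq_sum (x : E) :
    ‖T x‖ ^ 2 = ∑ i, hT.eigenvalues hn i ^ 2 * ‖(hT.eigenvectorBasis hn).repr x i‖ ^ 2 := by
  rw [← (hT.eigenvectorBasis hn).repr.norm_map, EuclideanSpace.norm_sq_eq]
  refine Finset.sum_congr rfl fun i _ => ?_
  rw [eigenvectorBasis_apply_self_apply, norm_mul, mul_pow, norm_ofReal, sq_abs]

include hT in
/-- The left-hand side is `re ⟪x, (T - a) (T - b) x⟫`. -/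
theorem norm_apply_sq_sub_re_inner_add_nonneg {a b : ℝ}
    (hab : ∀ μ : ℝ, HasEigenvalue T (μ : 𝕜) → 0 ≤ (μ - a) * (μ - b)) (x : E) :
    0 ≤ ‖T x‖ ^ 2 - (a + b) * re ⟪x, T x⟫_𝕜 + a * b * ‖x‖ ^ 2 := by
  rw [hT.norm_apply_sq_eq_sum rfl, hT.re_inner_apply_self_eq_sum rfl,
    hT.norm_sq_eq_sum_eigenvectorBasis rfl, Finset.mul_sum, Finset.mul_sum,
    ← Finset.sum_sub_distrib, ← Finset.sum_add_distrib]
  refine Finset.sum_nonneg fun i _ => ?_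
  have := hab _ (hT.hasEigenvalue_eigenvalues rfl i)
  nlinarith [sq_nonneg ‖(hT.eigenvectorBasis rfl).repr x i‖]

end LinearMap.IsSymmetric

theorem temple_inequality_general
    {V : Type*} [NormedAddCommGroup V] [InnerProductSpace ℂ V]
    [FiniteDimensional ℂ V]
    (T : V →ₗ[ℂ] V) (hT : T.IsSymmetric)
    (Egs Ees : ℝ)
    (hgs_min : ∀ μ : ℝ, Module.End.HasEigenvalue T (μ : ℂ) → Egs ≤ μ)
    (hes_second : ∀ μ : ℝ, Module.End.HasEigenvalue T (μ : ℂ) → μ ≠ Egs → Ees ≤ μ)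
    (ψ : V) (hψ : ‖ψ‖ = 1) (Eψ R2 : ℝ)
    (hE : (inner ℂ ψ (T ψ) : ℂ) = (Eψ : ℂ))
    (hR : (inner ℂ ψ (T (T ψ)) : ℂ) = ((R2 + Eψ ^ 2 : ℝ) : ℂ))
    (hlt : Eψ < Ees) :
    Egs ≥ Eψ - R2 / (Ees - Eψ) := by
  have hquad : ∀ μ : ℝ, HasEigenvalue T (μ : ℂ) → 0 ≤ (μ - Egs) * (μ - Ees) := by
    intro μ hμ
    rcases eq_or_ne μ Egs with rfl | hne
    · simp
    · exact mul_nonneg (sub_nonneg.2 (hgs_min μ hμ)) (sub_nonneg.2 (hes_second μ hμ hne))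
  have hnorm : ‖T ψ‖ ^ 2 = R2 + Eψ ^ 2 := by
    rw [← hT, inner_self_eq_norm_sq_to_K] at hR
    exact Complex.ofReal_injective (by simpa using hR)
  have henergy : re ⟪ψ, T ψ⟫_ℂ = Eψ := by simp [hE]
  have hvariance : (Eψ - Egs) * (Ees - Eψ) ≤ R2 := by
    have := hT.norm_apply_sq_sub_re_inner_add_nonneg hquad ψ
    rw [hnorm, henergy, hψ] at this
    linarith
  rw [ge_iff_le, sub_le_comm, le_div_iff₀ (sub_pos.2 hlt)]
  exact hvariance

/-- Temple's inequality: for a self-adjoint operator with lowest eigenvalue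
`Egs` and second-lowest spectral point `Ees`, and a unit vector `ψ` with
energy `Eψ < Ees`, one has `Egs ≥ Eψ − R²/(Ees − Eψ)`. -/
theorem temple_inequality
    {V : Type*} [NormedAddCommGroup V] [InnerProductSpace ℂ V]
    [FiniteDimensional ℂ V]
    (T : V →ₗ[ℂ] V) (hT : T.IsSymmetric)
    (Egs Ees : ℝ)
    (hgs_eig : Module.End.HasEigenvalue T (Egs : ℂ))
    (hgs_min : ∀ μ : ℝ, Module.End.HasEigenvalue T (μ : ℂ) → Egs ≤ μ)
    (hes_eig : Module.End.HasEigenvalue T (Ees : ℂ))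
    (hgs_lt_es : Egs < Ees)
    (hes_second : ∀ μ : ℝ, Module.End.HasEigenvalue T (μ : ℂ) → μ ≠ Egs → Ees ≤ μ)
    (ψ : V) (hψ : ‖ψ‖ = 1) (Eψ R2 : ℝ)
    (hE : (inner ℂ ψ (T ψ) : ℂ) = (Eψ : ℂ))
    (hR : (inner ℂ ψ (T (T ψ)) : ℂ) = ((R2 + Eψ ^ 2 : ℝ) : ℂ))
    (hlt : Eψ < Ees) :
    Egs ≥ Eψ - R2 / (Ees - Eψ) :=
  temple_inequality_general T hT Egs Ees hgs_min hes_second ψ hψ Eψ R2 hE hR hlt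
end

section
/- Let H be self-adjoint with an eigenvalue E separated from the rest of the spectrum by gap Δ, and ψ a unit vector with energy 𝓔 and variance R satisfying |𝓔 − E| ≤ R and 2R < Δ. If E is simple with unit eigenvector Ψ, then |⟨Ψ, ψ⟩|² ≥ 1 − 2R²/Δ². -/
/-!
Write `ψ = ⟪Ψ, ψ⟫ Ψ + φ` with `φ ⊥ Ψ`. Since `E` is simple, `φ` is orthogonal to the whole
`E`-eigenspace, so expanding in an eigenbasis gives `Δ ‖φ‖ ≤ ‖(T - E) φ‖ = ‖(T - E) ψ‖`, while
`‖(T - E) ψ‖² = R² + (𝓔 - E)² ≤ 2 R²`. Finally `‖φ‖² = 1 - ‖⟪Ψ, ψ⟫‖²`.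
-/

open Module Module.End Submodule RCLike
open scoped InnerProductSpace

namespace LinearMap.IsSymmetric

variable {𝕜 V : Type*} [RCLike 𝕜] [NormedAddCommGroup V] [InnerProductSpace 𝕜 V]
  {T : V →ₗ[𝕜] V}

theorem norm_apply_sub_smul_sq (hT : T.IsSymmetric) {ψ : V} (hψ : ‖ψ‖ = 1) (E : ℝ) :
    ‖T ψ - (E : 𝕜) • ψ‖ ^ 2 = re ⟪ψ, T (T ψ)⟫_𝕜 - 2 * E * re ⟪ψ, T ψ⟫_𝕜 + E ^ 2 := by
  rw [@norm_sub_sq 𝕜, @norm_sq_eq_re_inner 𝕜 _ _ _ _ (T ψ), hT ψ (T ψ), inner_smul_right,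
    re_ofReal_mul, hT ψ ψ, norm_smul, hψ, norm_ofReal, mul_one, sq_abs]
  ring

variable [FiniteDimensional 𝕜 V]

theorem norm_apply_sub_smul_sq_eq_sum (hT : T.IsSymmetric) {n : ℕ} (hn : finrank 𝕜 V = n)
    (E : ℝ) (x : V) :
    ‖T x - (E : 𝕜) • x‖ ^ 2 =
      ∑ i, (hT.eigenvalues hn i - E) ^ 2 * ‖⟪hT.eigenvectorBasis hn i, x⟫_𝕜‖ ^ 2 := by
  rw [← (hT.eigenvectorBasis hn).sum_sq_norm_inner_right]
  refine Finset.sum_congr rfl fun i _ => ?_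
  rw [inner_sub_right, inner_smul_right, ← hT, apply_eigenvectorBasis, inner_smul_left,
    conj_ofReal, ← sub_mul, ← ofReal_sub, norm_mul, mul_pow, norm_ofReal, sq_abs]

theorem sq_mul_norm_sq_le_of_mem_orthogonal_eigenspace (hT : T.IsSymmetric) {E Δ : ℝ}
    (hΔ : 0 ≤ Δ) (hgap : ∀ μ : ℝ, HasEigenvalue T (μ : 𝕜) → μ ≠ E → Δ ≤ |μ - E|) {x : V}
    (hx : x ∈ (eigenspace T (E : 𝕜))ᗮ) :
    Δ ^ 2 * ‖x‖ ^ 2 ≤ ‖T x - (E : 𝕜) • x‖ ^ 2 := by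
  rw [hT.norm_apply_sub_smul_sq_eq_sum rfl, ← (hT.eigenvectorBasis rfl).sum_sq_norm_inner_right,
    Finset.mul_sum]
  refine Finset.sum_le_sum fun i _ => ?_
  by_cases hμi : hT.eigenvalues rfl i = E
  · have hbi : hT.eigenvectorBasis rfl i ∈ eigenspace T (E : 𝕜) := by
      rw [mem_eigenspace_iff, apply_eigenvectorBasis, hμi]
    simp [hμi, inner_eq_zero_symm.mp ((mem_orthogonal' _ _).mp hx _ hbi)]
  · have hΔμ := pow_le_pow_left₀ hΔ (hgap _ (hT.hasEigenvalue_eigenvalues rfl i) hμi) 2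
    rw [sq_abs] at hΔμ
    gcongr

theorem eigenspace_eq_span_singleton {E : 𝕜} {Ψ : V} (hΨ : Ψ ≠ 0) (hΨ_eig : T Ψ = E • Ψ)
    (hsimple : finrank 𝕜 (eigenspace T E) = 1) :
    eigenspace T E = 𝕜 ∙ Ψ :=
  (eq_of_le_of_finrank_eq ((span_singleton_le_iff_mem _ _).mpr (mem_eigenspace_iff.mpr hΨ_eig))
    (by rw [finrank_span_singleton hΨ, hsimple])).symm

theorem sq_mul_sub_norm_inner_sq_le (hT : T.IsSymmetric) {E Δ : ℝ} (hΔ : 0 ≤ Δ)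
    (hgap : ∀ μ : ℝ, HasEigenvalue T (μ : 𝕜) → μ ≠ E → Δ ≤ |μ - E|) {Ψ : V} (hΨ : ‖Ψ‖ = 1)
    (hΨ_eig : T Ψ = (E : 𝕜) • Ψ) (hsimple : finrank 𝕜 (eigenspace T (E : 𝕜)) = 1) (ψ : V) :
    Δ ^ 2 * (‖ψ‖ ^ 2 - ‖⟪Ψ, ψ⟫_𝕜‖ ^ 2) ≤ ‖T ψ - (E : 𝕜) • ψ‖ ^ 2 := by
  have hK := eigenspace_eq_span_singleton (ne_zero_of_norm_ne_zero (hΨ.trans_ne one_ne_zero))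
    hΨ_eig hsimple
  set P := (𝕜 ∙ Ψ).starProjection
  have hPψ : T (P ψ) = (E : 𝕜) • P ψ := by
    rw [← mem_eigenspace_iff, hK]
    exact starProjection_apply_mem _ ψ
  have hnorm : ‖ψ‖ ^ 2 - ‖⟪Ψ, ψ⟫_𝕜‖ ^ 2 = ‖ψ - P ψ‖ ^ 2 := by
    rw [norm_sq_eq_add_norm_sq_starProjection ψ (𝕜 ∙ Ψ), starProjection_orthogonal_val,
      starProjection_unit_singleton 𝕜 hΨ, norm_smul, hΨ, mul_one]
    ring
  have hshift : T (ψ - P ψ) - (E : 𝕜) • (ψ - P ψ) = T ψ - (E : 𝕜) • ψ := by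
    rw [map_sub, hPψ, smul_sub]
    abel
  rw [hnorm, ← hshift]
  exact hT.sq_mul_norm_sq_le_of_mem_orthogonal_eigenspace hΔ hgap
    (hK ▸ sub_starProjection_mem_orthogonal ψ)

end LinearMap.IsSymmetric

theorem overlap_bound_special_case_general
    {V : Type*} [NormedAddCommGroup V] [InnerProductSpace ℂ V]
    [FiniteDimensional ℂ V]
    (T : V →ₗ[ℂ] V) (hT : T.IsSymmetric)
    (Eev Δ : ℝ) (Ψ : V) (hΨ : ‖Ψ‖ = 1)
    (hΨ_eig : T Ψ = (Eev : ℂ) • Ψ)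
    (hsimple : Module.finrank ℂ (Module.End.eigenspace T (Eev : ℂ)) = 1)
    (hΔ_pos : 0 < Δ)
    (hΔ_gap : ∀ μ : ℝ, Module.End.HasEigenvalue T (μ : ℂ) → μ ≠ Eev →
      Δ ≤ |μ - Eev|)
    (ψ : V) (hψ : ‖ψ‖ = 1) (Eψ R : ℝ)
    (hE : (inner ℂ ψ (T ψ) : ℂ) = (Eψ : ℂ))
    (hR : (inner ℂ ψ (T (T ψ)) : ℂ) = ((R ^ 2 + Eψ ^ 2 : ℝ) : ℂ))
    (hclose : |Eψ - Eev| ≤ R) :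
    1 - 2 * R ^ 2 / Δ ^ 2 ≤ ‖(inner ℂ Ψ ψ : ℂ)‖ ^ 2 := by
  -- restated so that the `RCLike` coercion and `re` become the `Complex` ones in `hE`, `hR`
  have hvariance : ‖T ψ - (Eev : ℂ) • ψ‖ ^ 2 =
      (⟪ψ, T (T ψ)⟫_ℂ).re - 2 * Eev * (⟪ψ, T ψ⟫_ℂ).re + Eev ^ 2 :=
    hT.norm_apply_sub_smul_sq hψ Eev
  have hoverlap : Δ ^ 2 * (‖ψ‖ ^ 2 - ‖⟪Ψ, ψ⟫_ℂ‖ ^ 2) ≤ ‖T ψ - (Eev : ℂ) • ψ‖ ^ 2 :=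
    hT.sq_mul_sub_norm_inner_sq_le hΔ_pos.le hΔ_gap hΨ hΨ_eig hsimple ψ
  rw [hE, hR, Complex.ofReal_re, Complex.ofReal_re] at hvariance
  have hclose_sq : (Eψ - Eev) ^ 2 ≤ R ^ 2 := sq_le_sq' (abs_le.mp hclose).1 (abs_le.mp hclose).2
  rw [hψ, hvariance] at hoverlap
  rw [sub_le_comm, le_div_iff₀ (by positivity)]
  linarith

/-- Overlap bound in the special case `|𝓔 − E| ≤ R`, `2R < Δ`:
`|⟨Ψ, ψ⟩|² ≥ 1 − 2R²/Δ²`. -/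
theorem overlap_bound_special_case
    {V : Type*} [NormedAddCommGroup V] [InnerProductSpace ℂ V]
    [FiniteDimensional ℂ V]
    (T : V →ₗ[ℂ] V) (hT : T.IsSymmetric)
    (Eev Δ : ℝ) (Ψ : V) (hΨ : ‖Ψ‖ = 1)
    (hΨ_eig : T Ψ = (Eev : ℂ) • Ψ)
    (hsimple : Module.finrank ℂ (Module.End.eigenspace T (Eev : ℂ)) = 1)
    (hΔ_pos : 0 < Δ)
    (hΔ_gap : ∀ μ : ℝ, Module.End.HasEigenvalue T (μ : ℂ) → μ ≠ Eev →
      Δ ≤ |μ - Eev|)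
    (ψ : V) (hψ : ‖ψ‖ = 1) (Eψ R : ℝ) (hR_nonneg : 0 ≤ R)
    (hE : (inner ℂ ψ (T ψ) : ℂ) = (Eψ : ℂ))
    (hR : (inner ℂ ψ (T (T ψ)) : ℂ) = ((R ^ 2 + Eψ ^ 2 : ℝ) : ℂ))
    (hclose : |Eψ - Eev| ≤ R) (hgap : 2 * R < Δ) :
    1 - 2 * R ^ 2 / Δ ^ 2 ≤ ‖(inner ℂ Ψ ψ : ℂ)‖ ^ 2 :=
  overlap_bound_special_case_general T hT Eev Δ Ψ hΨ hΨ_eig hsimple hΔ_pos hΔ_gap ψ hψ Eψ R hE hR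
    hclose
end

section
/- Let H be self-adjoint, ψ a unit vector with energy 𝓔 and variance R² satisfying R² < Δ²/4, where Δ is a uniform lower bound on the gap between any two distinct eigenvalues of H. Then there exists exactly one eigenvalue E of H in the interval (𝓔 − Δ/2, 𝓔 + Δ/2), and |𝓔 − E| ≤ 2R²/Δ. -/
/-! In an orthonormal eigenbasis of `T`, the unit vector `ψ` is a probability distribution on the
eigenvalues `λᵢ` with mean `𝓔` and variance `R²`, so some `λᵢ` satisfies `(λᵢ - 𝓔)² ≤ R² < Δ²/4`.
For `E := λᵢ` the gap gives `Δ |λⱼ - E| ≤ (λⱼ - E)²` for every `j`; averaging,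
`Δ |𝓔 - E| ≤ ∑ pⱼ (λⱼ - E)² = R² + (𝓔 - E)² ≤ 2R²`. Two eigenvalues in an open interval of
length `Δ` coincide, which gives uniqueness. -/

open Finset

section WeightedSums

variable {ι : Type*} [Fintype ι] {p x : ι → ℝ}

theorem exists_le_sum_weight_mul (hp : ∀ i, 0 ≤ p i) (h1 : ∑ i, p i = 1) :
    ∃ i, x i ≤ ∑ i, p i * x i := by
  have h := inf_le_centerMass (s := univ) (f := x) (fun i _ ↦ hp i) (h1 ▸ one_pos)
  obtain ⟨i, -, hi⟩ := exists_mem_eq_inf' (nonempty_of_sum_ne_zero (h1 ▸ one_ne_zero)) x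
  rw [centerMass_eq_of_sum_1 _ _ h1] at h
  exact ⟨i, hi ▸ h⟩

theorem sum_weight_mul_sub_sq (h1 : ∑ i, p i = 1) (a : ℝ) :
    ∑ i, p i * (x i - a) ^ 2 =
      ∑ i, p i * (x i - ∑ j, p j * x j) ^ 2 + (∑ j, p j * x j - a) ^ 2 := by
  have expand (b : ℝ) :
      ∑ i, p i * (x i - b) ^ 2 = ∑ i, p i * x i ^ 2 - 2 * b * ∑ i, p i * x i + b ^ 2 := by
    have (i : ι) : p i * (x i - b) ^ 2 = p i * x i ^ 2 - 2 * b * (p i * x i) + b ^ 2 * p i := by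
      ring
    simp only [this, sum_add_distrib, sum_sub_distrib, ← mul_sum, h1, mul_one]
  rw [expand, expand]
  ring

theorem mul_abs_sum_weight_mul_sub_le_of_gap (hp : ∀ i, 0 ≤ p i) (h1 : ∑ i, p i = 1)
    {Δ a : ℝ} (hΔ : 0 ≤ Δ) (hgap : ∀ i, x i ≠ a → Δ ≤ |x i - a|) :
    Δ * |∑ i, p i * x i - a| ≤ ∑ i, p i * (x i - a) ^ 2 := by
  have hmean : ∑ i, p i * x i - a = ∑ i, p i * (x i - a) := by
    simp only [mul_sub, sum_sub_distrib, ← sum_mul, h1, one_mul]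
  have hterm (i : ι) : Δ * |x i - a| ≤ (x i - a) ^ 2 := by
    rcases eq_or_ne (x i) a with h | h
    · simp [h]
    · rw [← sq_abs, sq]
      exact mul_le_mul_of_nonneg_right (hgap i h) (abs_nonneg _)
  calc Δ * |∑ i, p i * x i - a| ≤ Δ * ∑ i, p i * |x i - a| := by
        rw [hmean]
        refine mul_le_mul_of_nonneg_left ((abs_sum_le_sum_abs _ _).trans_eq ?_) hΔ
        simp only [abs_mul, abs_of_nonneg (hp _)]
    _ = ∑ i, p i * (Δ * |x i - a|) := by simp only [mul_sum, mul_left_comm]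
    _ ≤ ∑ i, p i * (x i - a) ^ 2 := sum_le_sum fun i _ ↦ mul_le_mul_of_nonneg_left (hterm i) (hp i)

theorem exists_sq_sub_le_and_mul_abs_sub_le_of_gap (hp : ∀ i, 0 ≤ p i) (h1 : ∑ i, p i = 1)
    {m V Δ : ℝ} (hm : ∑ i, p i * x i = m) (hV : ∑ i, p i * x i ^ 2 = V + m ^ 2) (hΔ : 0 ≤ Δ)
    (hgap : ∀ i j, x i ≠ x j → Δ ≤ |x i - x j|) :
    ∃ i, (x i - m) ^ 2 ≤ V ∧ Δ * |m - x i| ≤ 2 * V := by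
  have hvar : ∑ i, p i * (x i - m) ^ 2 = V := by
    have h := sum_weight_mul_sub_sq (x := x) h1 0
    simp only [sub_zero, hm, hV] at h
    linarith
  obtain ⟨i, hi⟩ := exists_le_sum_weight_mul (x := fun i ↦ (x i - m) ^ 2) hp h1
  rw [hvar] at hi
  have h := mul_abs_sum_weight_mul_sub_le_of_gap hp h1 hΔ fun j hj ↦ hgap j i hj
  rw [sum_weight_mul_sub_sq h1, hm, hvar, sub_sq_comm] at h
  exact ⟨i, hi, by linarith⟩

end WeightedSums

namespace LinearMap.IsSymmetric

variable {𝕜 E : Type*} [RCLike 𝕜] [NormedAddCommGroup E] [InnerProductSpace 𝕜 E]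
  [FiniteDimensional 𝕜 E] {T : E →ₗ[𝕜] E} {n : ℕ} (hT : T.IsSymmetric)
  (hn : Module.finrank 𝕜 E = n)

/-- The spectral measure of `v` is `∑ i, eigenweight i • δ (eigenvalues i)`. -/
noncomputable def eigenweight (v : E) (i : Fin n) : ℝ :=
  ‖(hT.eigenvectorBasis hn).repr v i‖ ^ 2

theorem eigenweight_nonneg (v : E) (i : Fin n) : 0 ≤ hT.eigenweight hn v i :=
  sq_nonneg _

theorem sum_eigenweight (v : E) : ∑ i, hT.eigenweight hn v i = ‖v‖ ^ 2 := by
  rw [← (hT.eigenvectorBasis hn).repr.norm_map, EuclideanSpace.norm_sq_eq]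
  rfl

theorem eigenvectorBasis_repr_pow_apply (k : ℕ) (v : E) (i : Fin n) :
    (hT.eigenvectorBasis hn).repr ((T ^ k) v) i =
      (hT.eigenvalues hn i : 𝕜) ^ k * (hT.eigenvectorBasis hn).repr v i := by
  induction k with
  | zero => simp
  | succ k ih => rw [pow_succ', Module.End.mul_apply, eigenvectorBasis_apply_self_apply, ih]; ring

theorem inner_pow_apply_self_eq_sum (k : ℕ) (v : E) :
    inner 𝕜 v ((T ^ k) v) = ((∑ i, hT.eigenweight hn v i * hT.eigenvalues hn i ^ k : ℝ) : 𝕜) := by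
  rw [← (hT.eigenvectorBasis hn).repr.inner_map_map, PiLp.inner_apply]
  simp only [eigenweight]
  push_cast
  refine sum_congr rfl fun i _ ↦ ?_
  rw [eigenvectorBasis_repr_pow_apply, RCLike.inner_apply, mul_assoc, RCLike.mul_conj, mul_comm]

end LinearMap.IsSymmetric

/-- If `R² < Δ²/4`, where `Δ` lower-bounds the gap between any two distinct
eigenvalues of the self-adjoint operator `T`, then there is exactly one
eigenvalue `E` in `(𝓔 − Δ/2, 𝓔 + Δ/2)`, and it satisfies `|𝓔 − E| ≤ 2R²/Δ`. -/
theorem unique_eigenvalue_near_energy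
    {V : Type*} [NormedAddCommGroup V] [InnerProductSpace ℂ V]
    [FiniteDimensional ℂ V]
    (T : V →ₗ[ℂ] V) (hT : T.IsSymmetric)
    (ψ : V) (hψ : ‖ψ‖ = 1) (Eψ R2 Δ : ℝ)
    (hE : (inner ℂ ψ (T ψ) : ℂ) = (Eψ : ℂ))
    (hR : (inner ℂ ψ (T (T ψ)) : ℂ) = ((R2 + Eψ ^ 2 : ℝ) : ℂ))
    (hΔ_pos : 0 < Δ)
    (hΔ_gap : ∀ lam mu : ℝ, Module.End.HasEigenvalue T (lam : ℂ) →
      Module.End.HasEigenvalue T (mu : ℂ) → lam ≠ mu → Δ ≤ |lam - mu|)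
    (hR2 : R2 < Δ ^ 2 / 4) :
    ∃ Eev : ℝ,
      (Module.End.HasEigenvalue T (Eev : ℂ) ∧
        Eψ - Δ / 2 < Eev ∧ Eev < Eψ + Δ / 2) ∧
      |Eψ - Eev| ≤ 2 * R2 / Δ ∧
      ∀ Eev' : ℝ, Module.End.HasEigenvalue T (Eev' : ℂ) →
        Eψ - Δ / 2 < Eev' → Eev' < Eψ + Δ / 2 → Eev' = Eev := by
  set lam := hT.eigenvalues rfl
  set p := hT.eigenweight rfl ψ
  have hlam_eig (j) : Module.End.HasEigenvalue T (lam j : ℂ) := hT.hasEigenvalue_eigenvalues rfl j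
  have moment (k : ℕ) : ((∑ i, p i * lam i ^ k : ℝ) : ℂ) = inner ℂ ψ ((T ^ k) ψ) :=
    (hT.inner_pow_apply_self_eq_sum rfl k ψ).symm
  have hp1 : ∑ i, p i = 1 := by rw [hT.sum_eigenweight, hψ, one_pow]
  have hmean : ∑ i, p i * lam i = Eψ := by
    have h := moment 1
    simp only [pow_one, hE] at h
    exact_mod_cast h
  have hmoment2 : ∑ i, p i * lam i ^ 2 = R2 + Eψ ^ 2 := by
    have h := moment 2
    rw [sq T, Module.End.mul_apply, hR] at h
    exact_mod_cast h
  obtain ⟨i, hsq, hmul⟩ := exists_sq_sub_le_and_mul_abs_sub_le_of_gap (hT.eigenweight_nonneg rfl ψ)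
    hp1 hmean hmoment2 hΔ_pos.le fun j k hjk ↦ hΔ_gap _ _ (hlam_eig j) (hlam_eig k) hjk
  have hnear : |Eψ - lam i| < Δ / 2 :=
    abs_lt_of_sq_lt_sq (by rw [sub_sq_comm]; linarith) (by positivity)
  obtain ⟨hlow, hhigh⟩ := abs_sub_lt_iff.mp hnear
  refine ⟨lam i, ⟨hlam_eig i, by linarith, by linarith⟩,
    (le_div_iff₀ hΔ_pos).mpr (by linarith), fun E' hE' h1 h2 ↦ ?_⟩
  by_contra hne
  exact (hΔ_gap _ _ hE' (hlam_eig i) hne).not_gt (abs_sub_lt_iff.mpr ⟨by linarith, by linarith⟩)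
end

section
/- Newton–Kantorovich theorem (modified Newton iteration): Let F : ℝᴺ → ℝᴺ be Fréchet-differentiable on the closed ball B(t₀, R) with Jacobian J, J(t₀) invertible, ‖J(t₀)⁻¹ F(t₀)‖ ≤ η, ‖J(t₀)⁻¹ J(t) − I‖ ≤ L‖t − t₀‖ for all t ∈ B(t₀, R), ηL < 1/2, and (1 − √(1 − 2Lη))/L ≤ R. Then the sequence t⁽ⁿ⁺¹⁾ = t⁽ⁿ⁾ − J(t₀)⁻¹F(t⁽ⁿ⁾) with t⁽⁰⁾ = t₀ converges to a root t* of F in B(t₀, R), and t* is the unique root in B(t₀, (1 − √(1 − 2Lη))/L). -/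
/-!
The modified Newton map `G x = x - J(t₀)⁻¹ F x` has derivative `I - J(t₀)⁻¹ J x`, of norm at most
`L ‖x - t₀‖`. Integrating this bound along the segment from `t₀` gives
`‖G x - G t₀‖ ≤ L/2 ‖x - t₀‖²`, so `G` maps the ball of radius `r` about `t₀` into itself as soon as
`L/2 r² + η ≤ r`, and on that ball it is `L r`-Lipschitz. The radius `r = (1 - √(1 - 2Lη))/L` is
the smaller root of `L/2 r² - r + η = 0`, and `L r = 1 - √(1 - 2Lη) < 1`, so the Banach fixed point
theorem applies; fixed points of `G` are exactly the zeros of `F`.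
-/

open Metric Set Filter Topology Function

section

variable {E F : Type*} [NormedAddCommGroup E] [NormedSpace ℝ E]
  [NormedAddCommGroup F] [NormedSpace ℝ F]

theorem StarConvex.norm_image_sub_le_of_norm_hasFDerivAt_le_mul_norm_sub
    {f : E → F} {f' : E → E →L[ℝ] F} {s : Set E} {c x : E} {L : ℝ}
    (hs : StarConvex ℝ c s) (hf : ∀ y ∈ s, HasFDerivAt f (f' y) y)
    (bound : ∀ y ∈ s, ‖f' y‖ ≤ L * ‖y - c‖) (hx : x ∈ s) :
    ‖f x - f c‖ ≤ L / 2 * ‖x - c‖ ^ 2 := by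
  set γ : ℝ → E := fun τ => c + τ • (x - c)
  have hγ : ∀ τ ∈ Icc (0 : ℝ) 1, γ τ ∈ s := fun τ hτ => hs.add_smul_sub_mem hx hτ.1 hτ.2
  have hderiv : ∀ τ ∈ Icc (0 : ℝ) 1,
      HasDerivAt (fun τ => f (γ τ) - f c) (f' (γ τ) (x - c)) τ := by
    intro τ hτ
    have hγ' : HasDerivAt γ (x - c) τ := by
      have := ((hasDerivAt_id τ).smul_const (x - c)).const_add c
      rwa [one_smul] at this
    exact ((hf _ (hγ τ hτ)).comp_hasDerivAt τ hγ').sub_const (f c)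
  have hbound : ∀ τ ∈ Ico (0 : ℝ) 1, ‖f' (γ τ) (x - c)‖ ≤ L * τ * ‖x - c‖ ^ 2 := by
    intro τ hτ
    have hγc : ‖γ τ - c‖ = τ * ‖x - c‖ := by
      simp [γ, norm_smul, abs_of_nonneg hτ.1]
    calc ‖f' (γ τ) (x - c)‖ ≤ ‖f' (γ τ)‖ * ‖x - c‖ := (f' (γ τ)).le_opNorm _
      _ ≤ L * ‖γ τ - c‖ * ‖x - c‖ := by
        gcongr
        exact bound _ (hγ τ (Ico_subset_Icc_self hτ))
      _ = L * τ * ‖x - c‖ ^ 2 := by rw [hγc]; ring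
  have hB : ∀ τ, HasDerivAt (fun τ : ℝ => L / 2 * τ ^ 2 * ‖x - c‖ ^ 2)
      (L * τ * ‖x - c‖ ^ 2) τ := by
    intro τ
    refine (((hasDerivAt_pow 2 τ).const_mul (L / 2)).mul_const (‖x - c‖ ^ 2)).congr_deriv ?_
    norm_num only [pow_one]
    ring
  simpa [γ] using image_norm_le_of_norm_deriv_right_le_deriv_boundary
    (fun τ hτ => (hderiv τ hτ).continuousAt.continuousWithinAt)
    (fun τ hτ => (hderiv τ (Ico_subset_Icc_self hτ)).hasDerivWithinAt) (by simp [γ]) hB hbound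
    (right_mem_Icc.2 zero_le_one)

theorem exists_fixedPoint_closedBall_of_norm_hasFDerivAt_le_mul_norm_sub [CompleteSpace E]
    {G : E → E} {G' : E → E →L[ℝ] E} {c : E} {r L η : ℝ}
    (hG : ∀ x ∈ closedBall c r, HasFDerivAt G (G' x) x)
    (bound : ∀ x ∈ closedBall c r, ‖G' x‖ ≤ L * ‖x - c‖)
    (hc : ‖G c - c‖ ≤ η) (hL : 0 ≤ L) (hr : L / 2 * r ^ 2 + η ≤ r) (hLr : L * r < 1) :
    ∃ y ∈ closedBall c r, IsFixedPt G y ∧ Tendsto (fun n => G^[n] c) atTop (𝓝 y) ∧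
      ∀ z ∈ closedBall c r, IsFixedPt G z → z = y := by
  have hr₀ : 0 ≤ r := by nlinarith [norm_nonneg (G c - c)]
  have hmaps : MapsTo G (closedBall c r) (closedBall c r) := by
    intro x hx
    rw [mem_closedBall, dist_eq_norm] at hx ⊢
    calc ‖G x - c‖ ≤ ‖G x - G c‖ + ‖G c - c‖ := norm_sub_le_norm_sub_add_norm_sub _ _ _
      _ ≤ L / 2 * ‖x - c‖ ^ 2 + η :=
        add_le_add ((convex_closedBall c r).starConvex (mem_closedBall_self hr₀)
          |>.norm_image_sub_le_of_norm_hasFDerivAt_le_mul_norm_sub hG bound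
            (mem_closedBall_iff_norm.2 hx)) hc
      _ ≤ r := le_trans (by gcongr) hr
  have hlip : LipschitzOnWith (Real.toNNReal (L * r)) G (closedBall c r) := by
    refine (convex_closedBall c r).lipschitzOnWith_of_nnnorm_hasFDerivWithin_le
      (fun x hx => (hG x hx).hasFDerivWithinAt) fun x hx => ?_
    rw [← NNReal.coe_le_coe, coe_nnnorm, Real.coe_toNNReal _ (mul_nonneg hL hr₀)]
    exact (bound x hx).trans (by gcongr; exact mem_closedBall_iff_norm.1 hx)
  have hcontr : ContractingWith (Real.toNNReal (L * r)) (hmaps.restrict G _ _) :=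
    ⟨by simpa using hLr, hlip.mapsToRestrict hmaps⟩
  obtain ⟨y, hy, hyfix, htend, -⟩ := hcontr.exists_fixedPoint' isClosed_closedBall.isComplete
    hmaps (mem_closedBall_self hr₀) (edist_ne_top _ _)
  refine ⟨y, hy, hyfix, htend, fun z hz hzfix => ?_⟩
  exact congrArg Subtype.val (hcontr.fixedPoint_unique' (x := ⟨z, hz⟩) (y := ⟨y, hy⟩)
    (Subtype.ext hzfix) (Subtype.ext hyfix))

end

theorem kantorovich_radius_spec {L η : ℝ} (hL : L ≠ 0) (h : 2 * L * η ≤ 1) :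
    L / 2 * ((1 - Real.sqrt (1 - 2 * L * η)) / L) ^ 2 + η =
      (1 - Real.sqrt (1 - 2 * L * η)) / L := by
  have hsq := Real.sq_sqrt (sub_nonneg.2 h)
  set σ := Real.sqrt (1 - 2 * L * η)
  field_simp
  linear_combination hsq

theorem newton_kantorovich_modified_general
    {X : Type*} [NormedAddCommGroup X] [NormedSpace ℝ X]
    [FiniteDimensional ℝ X]
    (F : X → X) (J : X → X →L[ℝ] X)
    (t₀ : X) (R η L : ℝ) (hL : 0 < L)
    (A : X ≃L[ℝ] X)
    (hF : ∀ t ∈ Metric.closedBall t₀ R, HasFDerivAt F (J t) t)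
    (hstep : ‖(A.symm : X →L[ℝ] X) (F t₀)‖ ≤ η)
    (hLip : ∀ t ∈ Metric.closedBall t₀ R,
      ‖(A.symm : X →L[ℝ] X).comp (J t) - ContinuousLinearMap.id ℝ X‖ ≤
        L * ‖t - t₀‖)
    (hηL : η * L < 1 / 2)
    (hRbig : (1 - Real.sqrt (1 - 2 * L * η)) / L ≤ R)
    (seq : ℕ → X) (hseq0 : seq 0 = t₀)
    (hseq : ∀ n, seq (n + 1) = seq n - (A.symm : X →L[ℝ] X) (F (seq n))) :
    ∃ tstar ∈ Metric.closedBall t₀ R,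
      Filter.Tendsto seq Filter.atTop (nhds tstar) ∧ F tstar = 0 ∧
      ∀ s ∈ Metric.closedBall t₀ ((1 - Real.sqrt (1 - 2 * L * η)) / L),
        F s = 0 → s = tstar := by
  have hball := closedBall_subset_closedBall (x := t₀) hRbig
  set G : X → X := fun x => x - (A.symm : X →L[ℝ] X) (F x)
  have hseq_eq : seq = fun n => G^[n] t₀ := by
    funext n
    induction n with
    | zero => exact hseq0
    | succ n ih => rw [hseq, ih, iterate_succ_apply']
  have hfix : ∀ x, IsFixedPt G x ↔ F x = 0 := by simp [IsFixedPt, G]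
  have hLr : L * ((1 - Real.sqrt (1 - 2 * L * η)) / L) < 1 := by
    rw [mul_div_cancel₀ _ hL.ne']
    linarith [Real.sqrt_pos.2 (by linarith : 0 < 1 - 2 * L * η)]
  obtain ⟨y, hy, hyfix, htend, huniq⟩ :=
    exists_fixedPoint_closedBall_of_norm_hasFDerivAt_le_mul_norm_sub
      (G' := fun x => ContinuousLinearMap.id ℝ X - (A.symm : X →L[ℝ] X).comp (J x))
      (fun x hx => (hasFDerivAt_id x).sub
        ((A.symm : X →L[ℝ] X).hasFDerivAt.comp x (hF x (hball hx))))
      (fun x hx => norm_sub_rev (E := X →L[ℝ] X) _ _ ▸ hLip x (hball hx))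
      (by simpa [G] using hstep) hL.le (kantorovich_radius_spec hL.ne' (by linarith)).le hLr
  exact ⟨y, hball hy, hseq_eq ▸ htend, (hfix y).1 hyfix,
    fun s hs hFs => huniq s hs ((hfix s).2 hFs)⟩

/-- Newton–Kantorovich theorem for the modified Newton iteration. -/
theorem newton_kantorovich_modified
    {X : Type*} [NormedAddCommGroup X] [NormedSpace ℝ X]
    [FiniteDimensional ℝ X]
    (N : ℕ) (hN : Module.finrank ℝ X = N)
    (F : X → X) (J : X → X →L[ℝ] X)
    (t₀ : X) (R η L : ℝ) (hR : 0 < R) (hη : 0 < η) (hL : 0 < L)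
    (A : X ≃L[ℝ] X) (hA : (A : X →L[ℝ] X) = J t₀)
    (hF : ∀ t ∈ Metric.closedBall t₀ R, HasFDerivAt F (J t) t)
    (hstep : ‖(A.symm : X →L[ℝ] X) (F t₀)‖ ≤ η)
    (hLip : ∀ t ∈ Metric.closedBall t₀ R,
      ‖(A.symm : X →L[ℝ] X).comp (J t) - ContinuousLinearMap.id ℝ X‖ ≤
        L * ‖t - t₀‖)
    (hηL : η * L < 1 / 2)
    (hRbig : (1 - Real.sqrt (1 - 2 * L * η)) / L ≤ R)
    (seq : ℕ → X) (hseq0 : seq 0 = t₀)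
    (hseq : ∀ n, seq (n + 1) = seq n - (A.symm : X →L[ℝ] X) (F (seq n))) :
    ∃ tstar ∈ Metric.closedBall t₀ R,
      Filter.Tendsto seq Filter.atTop (nhds tstar) ∧ F tstar = 0 ∧
      ∀ s ∈ Metric.closedBall t₀ ((1 - Real.sqrt (1 - 2 * L * η)) / L),
        F s = 0 → s = tstar :=
  newton_kantorovich_modified_general F J t₀ R η L hL A hF hstep hLip hηL hRbig seq hseq0 hseq
end

section
/- Under the hypotheses of the Newton–Kantorovich theorem for the modified Newton iteration t⁽ⁿ⁺¹⁾ = t⁽ⁿ⁾ − J(t₀)⁻¹F(t⁽ⁿ⁾), with q = 1 − √(1 − 2ηL), the iterates satisfy ‖t⁽ⁿ⁺¹⁾ − t⁽ⁿ⁾‖ ≤ qⁿ ‖t⁽¹⁾ − t⁽⁰⁾‖ and ‖t⁽ⁿ⁾ − t*‖ ≤ (qⁿ/(1 − q)) η for all n ≥ 0, where t* is the limit of the iteration. -/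
/-!
The modified Newton map `g t = t - J(t₀)⁻¹ F t` has derivative `I - J(t₀)⁻¹ J t`, of norm at most
`L ‖t - t₀‖`. Integrating along the segment from `t₀` gives `‖g t - g t₀‖ ≤ L/2 ‖t - t₀‖²`, so `g`
maps the ball of radius `ρ = q / L` about `t₀` into itself, `ρ` being the smaller root of
`η + L/2 ρ² = ρ`. On that ball `g` is `Lρ = q`-Lipschitz, so the steps decay like `qⁿ`, and summing
the geometric tail bounds the distance to the limit.
-/

open Metric Set Filter Topology

theorem norm_orbit_succ_sub_le_geometric {E : Type*} [SeminormedAddCommGroup E] {s : Set E}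
    {g : E → E} {q : ℝ} (hq : 0 ≤ q)
    (hg : ∀ a ∈ s, ∀ b ∈ s, ‖g b - g a‖ ≤ q * ‖b - a‖) (hmaps : MapsTo g s s)
    {u : ℕ → E} (hu : ∀ n, u (n + 1) = g (u n)) (hu₀ : u 0 ∈ s) (n : ℕ) :
    ‖u (n + 1) - u n‖ ≤ q ^ n * ‖u 1 - u 0‖ := by
  have hmem : ∀ n, u n ∈ s := fun n => by
    induction n with
    | zero => exact hu₀
    | succ n ih => exact hu n ▸ hmaps ih
  induction n with
  | zero => simp
  | succ n ih =>
    calc ‖u (n + 2) - u (n + 1)‖ ≤ q * ‖u (n + 1) - u n‖ := by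
          simpa only [← hu] using hg _ (hmem n) _ (hmem (n + 1))
      _ ≤ q * (q ^ n * ‖u 1 - u 0‖) := by gcongr
      _ = q ^ (n + 1) * ‖u 1 - u 0‖ := by ring

section

variable {E G : Type*} [NormedAddCommGroup E] [NormedSpace ℝ E]
  [NormedAddCommGroup G] [NormedSpace ℝ G]
  {f : E → G} {f' : E → E →L[ℝ] G} {x₀ : E} {r L : ℝ}

theorem norm_image_sub_le_half_mul_sq
    (hf : ∀ x ∈ closedBall x₀ r, HasFDerivAt f (f' x) x)
    (hf' : ∀ x ∈ closedBall x₀ r, ‖f' x‖ ≤ L * ‖x - x₀‖)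
    {b : E} (hb : b ∈ closedBall x₀ r) :
    ‖f b - f x₀‖ ≤ L / 2 * ‖b - x₀‖ ^ 2 := by
  set v := b - x₀
  have hseg : ∀ θ ∈ Icc (0 : ℝ) 1, x₀ + θ • v ∈ closedBall x₀ r := by
    intro θ hθ
    rw [mem_closedBall_iff_norm, add_sub_cancel_left, norm_smul, Real.norm_of_nonneg hθ.1]
    exact (mul_le_of_le_one_left (norm_nonneg v) hθ.2).trans (mem_closedBall_iff_norm.1 hb)
  have hderiv : ∀ θ ∈ Icc (0 : ℝ) 1,
      HasDerivAt (fun θ : ℝ => f (x₀ + θ • v) - f x₀) (f' (x₀ + θ • v) v) θ := by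
    intro θ hθ
    have hline : HasDerivAt (fun θ : ℝ => x₀ + θ • v) v θ := by
      simpa using ((hasDerivAt_id θ).smul_const v).const_add x₀
    exact ((hf _ (hseg θ hθ)).comp_hasDerivAt θ hline).sub_const _
  have hB : ∀ θ : ℝ,
      HasDerivAt (fun θ : ℝ => L / 2 * ‖v‖ ^ 2 * θ ^ 2) (L * ‖v‖ ^ 2 * θ) θ := fun θ =>
    ((hasDerivAt_pow 2 θ).const_mul (L / 2 * ‖v‖ ^ 2)).congr_deriv (by ring)
  have hbound : ∀ θ ∈ Ico (0 : ℝ) 1, ‖f' (x₀ + θ • v) v‖ ≤ L * ‖v‖ ^ 2 * θ := by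
    intro θ hθ
    have h := hf' _ (hseg θ (Ico_subset_Icc_self hθ))
    rw [add_sub_cancel_left, norm_smul, Real.norm_of_nonneg hθ.1] at h
    calc ‖f' (x₀ + θ • v) v‖ ≤ ‖f' (x₀ + θ • v)‖ * ‖v‖ := (f' _).le_opNorm v
      _ ≤ L * (θ * ‖v‖) * ‖v‖ := by gcongr
      _ = L * ‖v‖ ^ 2 * θ := by ring
  simpa [v] using image_norm_le_of_norm_deriv_right_le_deriv_boundary
    (fun θ hθ => (hderiv θ hθ).continuousAt.continuousWithinAt)
    (fun θ hθ => (hderiv θ (Ico_subset_Icc_self hθ)).hasDerivWithinAt) (by simp) hB hbound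
    (right_mem_Icc.2 zero_le_one)

theorem norm_image_sub_le_mul_radius_mul_norm_sub
    (hf : ∀ x ∈ closedBall x₀ r, HasFDerivAt f (f' x) x)
    (hf' : ∀ x ∈ closedBall x₀ r, ‖f' x‖ ≤ L * ‖x - x₀‖) (hL : 0 ≤ L)
    {a b : E} (ha : a ∈ closedBall x₀ r) (hb : b ∈ closedBall x₀ r) :
    ‖f b - f a‖ ≤ L * r * ‖b - a‖ :=
  (convex_closedBall x₀ r).norm_image_sub_le_of_norm_hasFDerivWithin_le
    (fun x hx => (hf x hx).hasFDerivWithinAt)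
    (fun x hx => (hf' x hx).trans (by gcongr; exact mem_closedBall_iff_norm.1 hx)) ha hb

theorem mapsTo_closedBall_of_norm_hasFDerivAt_le {g : E → E} {g' : E → E →L[ℝ] E} {η : ℝ}
    (hg : ∀ x ∈ closedBall x₀ r, HasFDerivAt g (g' x) x)
    (hg' : ∀ x ∈ closedBall x₀ r, ‖g' x‖ ≤ L * ‖x - x₀‖) (hL : 0 ≤ L)
    (hx₀ : ‖g x₀ - x₀‖ ≤ η) (hr : η + L / 2 * r ^ 2 ≤ r) :
    MapsTo g (closedBall x₀ r) (closedBall x₀ r) := by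
  intro x hx
  have hxr : ‖x - x₀‖ ≤ r := mem_closedBall_iff_norm.1 hx
  rw [mem_closedBall_iff_norm]
  calc ‖g x - x₀‖ ≤ ‖g x - g x₀‖ + ‖g x₀ - x₀‖ := norm_sub_le_norm_sub_add_norm_sub _ _ _
    _ ≤ L / 2 * ‖x - x₀‖ ^ 2 + η := add_le_add (norm_image_sub_le_half_mul_sq hg hg' hx) hx₀
    _ ≤ L / 2 * r ^ 2 + η := by gcongr
    _ ≤ r := by linarith

end

theorem one_sub_sqrt_div_eq_add_half_mul_sq {η L : ℝ} (hL : L ≠ 0) (h : 2 * η * L ≤ 1) :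
    (1 - √(1 - 2 * η * L)) / L = η + L / 2 * ((1 - √(1 - 2 * η * L)) / L) ^ 2 := by
  have hsq := Real.sq_sqrt (sub_nonneg.2 h)
  set s := √(1 - 2 * η * L)
  field_simp
  linear_combination -hsq

theorem newton_kantorovich_estimates_general
    {X : Type*} [NormedAddCommGroup X] [NormedSpace ℝ X]
    (F : X → X) (J : X → X →L[ℝ] X)
    (t₀ : X) (R η L : ℝ) (hL : 0 < L)
    (A : X ≃L[ℝ] X)
    (hF : ∀ t ∈ Metric.closedBall t₀ R, HasFDerivAt F (J t) t)
    (hstep : ‖(A.symm : X →L[ℝ] X) (F t₀)‖ ≤ η)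
    (hLip : ∀ t ∈ Metric.closedBall t₀ R,
      ‖(A.symm : X →L[ℝ] X).comp (J t) - ContinuousLinearMap.id ℝ X‖ ≤
        L * ‖t - t₀‖)
    (hηL : η * L < 1 / 2)
    (hRbig : (1 - Real.sqrt (1 - 2 * L * η)) / L ≤ R)
    (seq : ℕ → X) (hseq0 : seq 0 = t₀)
    (hseq : ∀ n, seq (n + 1) = seq n - (A.symm : X →L[ℝ] X) (F (seq n)))
    (tstar : X) (htend : Filter.Tendsto seq Filter.atTop (nhds tstar)) :
    ∀ n : ℕ,
      ‖seq (n + 1) - seq n‖ ≤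
        (1 - Real.sqrt (1 - 2 * η * L)) ^ n * ‖seq 1 - seq 0‖ ∧
      ‖seq n - tstar‖ ≤
        (1 - Real.sqrt (1 - 2 * η * L)) ^ n /
          (1 - (1 - Real.sqrt (1 - 2 * η * L))) * η := by
  set q := 1 - √(1 - 2 * η * L)
  have hη : 0 ≤ η := (norm_nonneg _).trans hstep
  have hq₀ : 0 ≤ q := sub_nonneg.2 (Real.sqrt_le_one.2 (by nlinarith))
  have hq₁ : q < 1 := sub_lt_self 1 (Real.sqrt_pos.2 (by linarith))
  have hball : closedBall t₀ (q / L) ⊆ closedBall t₀ R :=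
    closedBall_subset_closedBall (by rwa [mul_right_comm] at hRbig)
  set g : X → X := fun t => t - (A.symm : X →L[ℝ] X) (F t)
  set g' : X → X →L[ℝ] X := fun t =>
    ContinuousLinearMap.id ℝ X - (A.symm : X →L[ℝ] X).comp (J t)
  have hg : ∀ t ∈ closedBall t₀ (q / L), HasFDerivAt g (g' t) t := fun t ht =>
    (hasFDerivAt_id t).sub ((A.symm : X →L[ℝ] X).hasFDerivAt.comp t (hF t (hball ht)))
  have hg' : ∀ t ∈ closedBall t₀ (q / L), ‖g' t‖ ≤ L * ‖t - t₀‖ := fun t ht => by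
    rw [norm_sub_rev]; exact hLip t (hball ht)
  have hmaps : MapsTo g (closedBall t₀ (q / L)) (closedBall t₀ (q / L)) :=
    mapsTo_closedBall_of_norm_hasFDerivAt_le hg hg' hL.le (by simpa [g] using hstep)
      (one_sub_sqrt_div_eq_add_half_mul_sq hL.ne' (by linarith)).ge
  have hcontr : ∀ a ∈ closedBall t₀ (q / L), ∀ b ∈ closedBall t₀ (q / L),
      ‖g b - g a‖ ≤ q * ‖b - a‖ := fun a ha b hb => by
    simpa [mul_div_cancel₀ q hL.ne'] using
      norm_image_sub_le_mul_radius_mul_norm_sub hg hg' hL.le ha hb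
  have hsteps := norm_orbit_succ_sub_le_geometric hq₀ hcontr hmaps hseq
    (hseq0 ▸ mem_closedBall_self (div_nonneg hq₀ hL.le))
  have hfirst : ‖seq 1 - seq 0‖ ≤ η := by
    rw [hseq 0, hseq0]; simpa using hstep
  refine fun n => ⟨hsteps n, ?_⟩
  have hlimit := dist_le_of_le_geometric_of_tendsto q η hq₁ (fun k => by
    rw [dist_comm, dist_eq_norm, mul_comm]
    exact (hsteps k).trans (mul_le_mul_of_nonneg_left hfirst (pow_nonneg hq₀ k))) htend n
  rw [← dist_eq_norm]
  exact hlimit.trans_eq (by ring)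

/-- Convergence estimates for the modified Newton iteration under the
Newton–Kantorovich hypotheses, with rate `q = 1 − √(1 − 2ηL)`. -/
theorem newton_kantorovich_estimates
    {X : Type*} [NormedAddCommGroup X] [NormedSpace ℝ X]
    [FiniteDimensional ℝ X]
    (N : ℕ) (hN : Module.finrank ℝ X = N)
    (F : X → X) (J : X → X →L[ℝ] X)
    (t₀ : X) (R η L : ℝ) (hR : 0 < R) (hη : 0 < η) (hL : 0 < L)
    (A : X ≃L[ℝ] X) (hA : (A : X →L[ℝ] X) = J t₀)
    (hF : ∀ t ∈ Metric.closedBall t₀ R, HasFDerivAt F (J t) t)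
    (hstep : ‖(A.symm : X →L[ℝ] X) (F t₀)‖ ≤ η)
    (hLip : ∀ t ∈ Metric.closedBall t₀ R,
      ‖(A.symm : X →L[ℝ] X).comp (J t) - ContinuousLinearMap.id ℝ X‖ ≤
        L * ‖t - t₀‖)
    (hηL : η * L < 1 / 2)
    (hRbig : (1 - Real.sqrt (1 - 2 * L * η)) / L ≤ R)
    (seq : ℕ → X) (hseq0 : seq 0 = t₀)
    (hseq : ∀ n, seq (n + 1) = seq n - (A.symm : X →L[ℝ] X) (F (seq n)))
    (tstar : X) (htend : Filter.Tendsto seq Filter.atTop (nhds tstar)) :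
    ∀ n : ℕ,
      ‖seq (n + 1) - seq n‖ ≤
        (1 - Real.sqrt (1 - 2 * η * L)) ^ n * ‖seq 1 - seq 0‖ ∧
      ‖seq n - tstar‖ ≤
        (1 - Real.sqrt (1 - 2 * η * L)) ^ n /
          (1 - (1 - Real.sqrt (1 - 2 * η * L))) * η :=
  newton_kantorovich_estimates_general F J t₀ R η L hL A hF hstep hLip hηL hRbig seq hseq0 hseq
    tstar htend
end
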